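/- Let 1 < q < 2 and p ≥ 4. Let A > 0, B ≥ 0, D > 0 be real numbers, set F := A + B − D, and assume (2−q)A + (4−q)B > (p−q)D. Then A/2 + B/4 − F/q − D/p < −((p−4)(p−q)/(4pq)) · D; in particular A/2 + B/4 − F/q − D/p < 0. -/
import Mathlib


/-- The algebraic content of Lemma 2.8(i) of the paper: if `1 < q < 2`, `p ≥ 4`,
`A > 0`, `B ≥ 0`, `D > 0`, `F = A + B - D` and `(2-q)A + (4-q)B > (p-q)D`, then
`A/2 + B/4 - F/q - D/p < -((p-4)(p-q)/(4pq))·D < 0` (in particular the energy is negative). -/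
theorem nehari_plus_energy_neg (q p A B D : ℝ) (hq1 : 1 < q) (hq2 : q < 2) (hp : 4 ≤ p)
    (hA : 0 < A) (hB : 0 ≤ B) (hD : 0 < D)
    (h : (2 - q) * A + (4 - q) * B > (p - q) * D) :
    A / 2 + B / 4 - (A + B - D) / q - D / p < -((p - 4) * (p - q) / (4 * p * q)) * D ∧
    A / 2 + B / 4 - (A + B - D) / q - D / p < 0 := by
  have hq0 : 0 < q := by linarith
  have hp0 : 0 < p := by linarith
  have hph : p * ((2 - q) * A + (4 - q) * B) > p * ((p - q) * D) :=
    mul_lt_mul_of_pos_left h hp0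
  have hAq : 0 ≤ p * ((2 - q) * A) := mul_nonneg hp0.le (mul_nonneg (by linarith) hA.le)
  have eq1 : -((p - 4) * (p - q) / (4 * p * q)) * D - (A / 2 + B / 4 - (A + B - D) / q - D / p)
      = (2 * p * (2 - q) * A + p * (4 - q) * B - p * (p - q) * D) / (4 * p * q) := by
    field_simp
    ring
  have hnum : 0 < 2 * p * (2 - q) * A + p * (4 - q) * B - p * (p - q) * D := by nlinarith
  have h1 : A / 2 + B / 4 - (A + B - D) / q - D / p < -((p - 4) * (p - q) / (4 * p * q)) * D := by
    have := div_pos hnum (by positivity : (0:ℝ) < 4 * p * q)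
    linarith [eq1 ▸ this]
  refine ⟨h1, lt_of_lt_of_le h1 ?_⟩
  have h2 : 0 ≤ (p - 4) * (p - q) / (4 * p * q) * D :=
    mul_nonneg (div_nonneg (mul_nonneg (by linarith) (by linarith)) (by positivity)) hD.le
  linarith
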